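/- arXiv:2605.23761 — 2 statements merged into one kernel-verified Lean document; each statement's English description precedes it below -/
import Mathlib

section
/- Let A be symmetric positive definite and apply a Broyden-class method with exact line search and SPD initial matrix H₀ to the strictly convex quadratic q. If φ_k > φ_k^c for all k, then y_kᵀ H_k y_k > 0 at every iteration (so the condition y_kᵀH_ky_k ≠ 0 holds automatically), the proportionality recurrence γ_{k+1} = (γ_k g_kᵀH₀g_k + φ_k g_{k+1}ᵀH₀g_{k+1}) / (γ_k g_kᵀH₀g_k + g_{k+1}ᵀH₀g_{k+1}) holds with d_k = γ_k d_k^{PCG}, and quadratic termination occurs. -/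
/-!
Induct on `k` while the gradients are nonzero. For `φ > φᶜ` the Broyden update keeps `H k`
positive definite: in the coordinates `p = sᵀz`, `t = (H y)ᵀz` its quadratic form is
`p² / sᵀy + (φ - φᶜ) (yᵀHy) (p / sᵀy - t / yᵀHy)²` plus a multiple of a Gram determinant.
The `k`-th update is supported on `span {d k, H₀ g (k + 1)} ⊆ span {d 0, …, d (k + 1)}`, so
`H k` agrees with `H₀` on vectors orthogonal to `d 0, …, d k`, in particular on `g (k + 1)`. Hence `H (k + 1) g (k + 1)`
is an explicit combination of `H₀ g (k + 1)` and `d k`, which makes `d (k + 1)` the multiple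
`γ (k + 1)` of the PCG direction; the directions stay `A`-conjugate and the gradients
`H₀`-orthogonal. Exact line search is blind to the length of the direction, so the iterates
are those of PCG, and `n + 1` nonzero `H₀`-orthogonal gradients cannot exist.
-/

open Matrix

variable {ι : Type*} [Fintype ι]

lemma Matrix.IsHermitian.dotProduct_mulVec_comm {M : Matrix ι ι ℝ} (hM : M.IsHermitian)
    (x y : ι → ℝ) : x ⬝ᵥ (M *ᵥ y) = y ⬝ᵥ (M *ᵥ x) := by
  rw [dotProduct_mulVec, ← mulVec_transpose, (isHermitian_iff_isSymm.mp hM).eq, dotProduct_comm]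

lemma Matrix.IsHermitian.mulVec_dotProduct {M : Matrix ι ι ℝ} (hM : M.IsHermitian)
    (x y : ι → ℝ) : (M *ᵥ x) ⬝ᵥ y = x ⬝ᵥ (M *ᵥ y) := by
  rw [dotProduct_comm, hM.dotProduct_mulVec_comm]

lemma Matrix.PosDef.dotProduct_mulVec_self_pos {M : Matrix ι ι ℝ} (hM : M.PosDef) {x : ι → ℝ}
    (hx : x ≠ 0) : 0 < x ⬝ᵥ (M *ᵥ x) := by
  simpa using hM.dotProduct_mulVec_pos hx

/-- `(c e - a²)` times the Gram determinant of `z, r, y` for the form of `M`. -/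
lemma Matrix.PosSemidef.gram_inequality {M : Matrix ι ι ℝ} (hM : M.PosSemidef)
    (r y z : ι → ℝ) :
    let e := r ⬝ᵥ (M *ᵥ r); let c := y ⬝ᵥ (M *ᵥ y); let a := r ⬝ᵥ (M *ᵥ y)
    let p := r ⬝ᵥ (M *ᵥ z); let t := y ⬝ᵥ (M *ᵥ z)
    0 ≤ (c * e - a ^ 2) *
      ((c * e - a ^ 2) * (z ⬝ᵥ (M *ᵥ z)) - (c * p ^ 2 - 2 * a * p * t + e * t ^ 2)) := by
  intro e c a p t
  set w := (c * e - a ^ 2) • z - (c * p - a * t) • r - (e * t - a * p) • y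
  have hw : 0 ≤ w ⬝ᵥ (M *ᵥ w) := by simpa using hM.dotProduct_mulVec_nonneg w
  have h1 := hM.isHermitian.dotProduct_mulVec_comm z r
  have h2 := hM.isHermitian.dotProduct_mulVec_comm z y
  have h3 := hM.isHermitian.dotProduct_mulVec_comm y r
  simp only [w, mulVec_sub, mulVec_smul, dotProduct_sub, sub_dotProduct, dotProduct_smul,
    smul_dotProduct, smul_eq_mul, h1, h2, h3] at hw
  linear_combination hw

lemma Matrix.PosDef.card_le_of_pairwise_orthogonal [DecidableEq ι] {P : Matrix ι ι ℝ}
    (hP : P.PosDef) {κ : Type*} [Fintype κ] {v : κ → ι → ℝ} (hv : ∀ i, v i ≠ 0)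
    (horth : Pairwise fun i j => v i ⬝ᵥ (P *ᵥ v j) = 0) : Fintype.card κ ≤ Fintype.card ι := by
  have hli := LinearMap.linearIndependent_of_isOrthoᵢ (B := Matrix.toLinearMap₂' ℝ P) (v := v)
    (by simpa [LinearMap.IsOrthoᵢ, toLinearMap₂'_apply'] using horth)
    (fun i => by simpa [toLinearMap₂'_apply'] using (hP.dotProduct_mulVec_self_pos (hv i)).ne')
  simpa using hli.fintype_card_le_finrank

lemma broyden_quadratic_pos {Z p t a c e φ : ℝ} (ha : 0 < a) (hc : 0 < c) (hΔ : a ^ 2 < c * e)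
    (hZ : 0 < Z) (hgram : c * p ^ 2 - 2 * a * p * t + e * t ^ 2 ≤ (c * e - a ^ 2) * Z)
    (hφ : a ^ 2 / (a ^ 2 - c * e) < φ) :
    0 < Z + p ^ 2 / a - t ^ 2 / c + φ * c * (p / a - t / c) ^ 2 := by
  have hΔ' : a ^ 2 - c * e ≠ 0 := by linarith
  have hΔ'' : c * e - a ^ 2 ≠ 0 := by linarith
  -- `a² / (a² - c e)` is `φᶜ`, and at `φ = φᶜ` only the Gram term and `p² / a` are left
  have key : Z + p ^ 2 / a - t ^ 2 / c + φ * c * (p / a - t / c) ^ 2 =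
      ((c * e - a ^ 2) * Z - (c * p ^ 2 - 2 * a * p * t + e * t ^ 2)) / (c * e - a ^ 2)
        + p ^ 2 / a + (φ - a ^ 2 / (a ^ 2 - c * e)) * c * (p / a - t / c) ^ 2 := by
    field_simp
    ring
  have hgram' : 0 ≤ ((c * e - a ^ 2) * Z - (c * p ^ 2 - 2 * a * p * t + e * t ^ 2)) /
      (c * e - a ^ 2) := div_nonneg (by linarith) (by linarith)
  obtain ⟨ψ, hψ, rfl⟩ : ∃ ψ, 0 < ψ ∧ φ = ψ + a ^ 2 / (a ^ 2 - c * e) :=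
    ⟨φ - a ^ 2 / (a ^ 2 - c * e), by linarith, by ring⟩
  by_cases hpt : p = 0 ∧ t = 0
  · obtain ⟨rfl, rfl⟩ := hpt
    simpa using hZ
  have hpos : 0 < p ^ 2 / a + ψ * c * (p / a - t / c) ^ 2 := by
    rcases eq_or_ne p 0 with rfl | hp
    · have ht : t / c ≠ 0 := div_ne_zero (by tauto) hc.ne'
      rw [zero_div, zero_sub, neg_sq]
      positivity
    · have : 0 ≤ ψ * c * (p / a - t / c) ^ 2 := by positivity
      have : 0 < p ^ 2 / a := by positivity
      linarith
  rw [key, add_sub_cancel_right]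
  linarith

noncomputable def broydenVec (H : Matrix ι ι ℝ) (s y : ι → ℝ) : ι → ℝ :=
  (1 / (s ⬝ᵥ y)) • s - (1 / (y ⬝ᵥ (H *ᵥ y))) • (H *ᵥ y)

noncomputable def broydenUpdate (H : Matrix ι ι ℝ) (s y : ι → ℝ) (φ : ℝ) : Matrix ι ι ℝ :=
  H + (1 / (s ⬝ᵥ y)) • vecMulVec s s
    - (1 / (y ⬝ᵥ (H *ᵥ y))) • vecMulVec (H *ᵥ y) (H *ᵥ y)
    + (φ * (y ⬝ᵥ (H *ᵥ y))) • vecMulVec (broydenVec H s y) (broydenVec H s y)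

section

variable (H : Matrix ι ι ℝ) (s y : ι → ℝ) (φ : ℝ)

lemma broydenUpdate_mulVec (z : ι → ℝ) :
    broydenUpdate H s y φ *ᵥ z = H *ᵥ z + ((s ⬝ᵥ z) / (s ⬝ᵥ y)) • s
      - (((H *ᵥ y) ⬝ᵥ z) / (y ⬝ᵥ (H *ᵥ y))) • (H *ᵥ y)
      + (φ * (y ⬝ᵥ (H *ᵥ y)) * (broydenVec H s y ⬝ᵥ z)) • broydenVec H s y := by
  simp only [broydenUpdate, add_mulVec, sub_mulVec, smul_mulVec, vecMulVec_mulVec,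
    op_smul_eq_smul, smul_smul]
  module

lemma dotProduct_broydenUpdate_mulVec (z : ι → ℝ) :
    z ⬝ᵥ (broydenUpdate H s y φ *ᵥ z) = z ⬝ᵥ (H *ᵥ z) + (s ⬝ᵥ z) ^ 2 / (s ⬝ᵥ y)
      - ((H *ᵥ y) ⬝ᵥ z) ^ 2 / (y ⬝ᵥ (H *ᵥ y))
      + φ * (y ⬝ᵥ (H *ᵥ y)) * (broydenVec H s y ⬝ᵥ z) ^ 2 := by
  rw [broydenUpdate_mulVec]
  simp only [dotProduct_add, dotProduct_sub, dotProduct_smul, smul_eq_mul]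
  rw [dotProduct_comm z s, dotProduct_comm z (H *ᵥ y), dotProduct_comm z (broydenVec H s y)]
  ring

lemma broydenUpdate_mulVec_of_orthogonal {z : ι → ℝ} (hs : s ⬝ᵥ z = 0)
    (hy : (H *ᵥ y) ⬝ᵥ z = 0) : broydenUpdate H s y φ *ᵥ z = H *ᵥ z := by
  have hv : broydenVec H s y ⬝ᵥ z = 0 := by
    simp [broydenVec, sub_dotProduct, hs, hy]
  simp [broydenUpdate_mulVec, hs, hy, hv]

lemma broydenUpdate_mulVec_self (hsy : s ⬝ᵥ y ≠ 0) (hy : y ⬝ᵥ (H *ᵥ y) ≠ 0) :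
    broydenUpdate H s y φ *ᵥ y = s := by
  have hv : broydenVec H s y ⬝ᵥ y = 0 := by
    simp only [broydenVec, sub_dotProduct, smul_dotProduct, smul_eq_mul,
      dotProduct_comm (H *ᵥ y) y]
    field_simp
    ring
  rw [broydenUpdate_mulVec, hv, dotProduct_comm (H *ᵥ y), div_self hsy, div_self hy]
  simp

variable {H} in
lemma Matrix.IsHermitian.broydenUpdate (hH : H.IsHermitian) :
    (broydenUpdate H s y φ).IsHermitian := by
  have hvv (u : ι → ℝ) : (vecMulVec u u).IsHermitian := by
    simp [IsHermitian]
  exact ((hH.add ((hvv s).smul (.all _))).sub ((hvv _).smul (.all _))).add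
    ((hvv _).smul (.all _))

end

noncomputable def broydenCriticalParam [DecidableEq ι] (H : Matrix ι ι ℝ) (s y : ι → ℝ) : ℝ :=
  (y ⬝ᵥ s) ^ 2 / ((y ⬝ᵥ s) ^ 2 - (y ⬝ᵥ (H *ᵥ y)) * (s ⬝ᵥ (H⁻¹ *ᵥ s)))

lemma Matrix.PosDef.broydenUpdate [DecidableEq ι] {M : Matrix ι ι ℝ} (hM : M.PosDef)
    {s y : ι → ℝ} {φ : ℝ} (hsy : 0 < s ⬝ᵥ y)
    (hcs : (s ⬝ᵥ y) ^ 2 < (y ⬝ᵥ (M *ᵥ y)) * (s ⬝ᵥ (M⁻¹ *ᵥ s)))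
    (hφ : broydenCriticalParam M s y < φ) : (broydenUpdate M s y φ).PosDef := by
  have hMs : M.IsHermitian := hM.isHermitian
  set r := M⁻¹ *ᵥ s
  have hr : M *ᵥ r = s := by
    rw [mulVec_mulVec, mul_nonsing_inv _ ((isUnit_iff_isUnit_det M).mp hM.isUnit), one_mulVec]
  have hc : 0 < y ⬝ᵥ (M *ᵥ y) := by
    refine hM.dotProduct_mulVec_self_pos ?_
    rintro rfl
    simp at hsy
  refine .of_dotProduct_mulVec_pos (hMs.broydenUpdate s y φ) fun z hz => ?_
  have hZ := hM.dotProduct_mulVec_self_pos hz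
  have hv : broydenVec M s y ⬝ᵥ z =
      (s ⬝ᵥ z) / (s ⬝ᵥ y) - ((M *ᵥ y) ⬝ᵥ z) / (y ⬝ᵥ (M *ᵥ y)) := by
    simp only [broydenVec, sub_dotProduct, smul_dotProduct, smul_eq_mul]
    ring
  rw [star_trivial, dotProduct_broydenUpdate_mulVec, hv]
  rw [broydenCriticalParam, dotProduct_comm y s] at hφ
  refine broyden_quadratic_pos hsy hc hcs hZ ?_ hφ
  have hgram := hM.posSemidef.gram_inequality r y z
  simp only [hr, ← hMs.mulVec_dotProduct r, dotProduct_comm r s] at hgram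
  rw [hMs.mulVec_dotProduct y z]
  linarith [nonneg_of_mul_nonneg_right hgram (by linarith)]

namespace QuasiNewtonStep

variable {H : Matrix ι ι ℝ} {g g' d : ι → ℝ}

lemma dir_dotProduct_sub (hd : d = -(H *ᵥ g)) (horth : g' ⬝ᵥ d = 0) :
    d ⬝ᵥ (g' - g) = g ⬝ᵥ (H *ᵥ g) := by
  rw [dotProduct_sub, dotProduct_comm, horth, hd, neg_dotProduct, dotProduct_comm, zero_sub,
    neg_neg]

lemma sub_dotProduct_mulVec_sub (hH : H.IsHermitian) (hd : d = -(H *ᵥ g))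
    (horth : g' ⬝ᵥ d = 0) :
    (g' - g) ⬝ᵥ (H *ᵥ (g' - g)) = g ⬝ᵥ (H *ᵥ g) + g' ⬝ᵥ (H *ᵥ g') := by
  have hgg' : g ⬝ᵥ (H *ᵥ g') = 0 := by
    rw [hH.dotProduct_mulVec_comm, ← neg_eq_zero, ← dotProduct_neg, ← hd, horth]
  simp only [mulVec_sub, dotProduct_sub, sub_dotProduct, hgg', hH.dotProduct_mulVec_comm g' g]
  ring

lemma inv_mulVec_dir [DecidableEq ι] (hH : IsUnit H) (hd : d = -(H *ᵥ g)) : H⁻¹ *ᵥ d = -g := by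
  rw [hd, mulVec_neg, mulVec_mulVec, nonsing_inv_mul _ ((isUnit_iff_isUnit_det H).mp hH),
    one_mulVec]

lemma broydenUpdate_mulVec_grad (hH : H.IsHermitian) (hd : d = -(H *ᵥ g))
    (horth : g' ⬝ᵥ d = 0) {α : ℝ} (hα : α ≠ 0) (hρ : g ⬝ᵥ (H *ᵥ g) ≠ 0)
    (hρτ : g ⬝ᵥ (H *ᵥ g) + g' ⬝ᵥ (H *ᵥ g') ≠ 0) (φ : ℝ) :
    broydenUpdate H (α • d) (g' - g) φ *ᵥ g' =
      ((g ⬝ᵥ (H *ᵥ g) + φ * (g' ⬝ᵥ (H *ᵥ g'))) / (g ⬝ᵥ (H *ᵥ g) + g' ⬝ᵥ (H *ᵥ g'))) •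
        (H *ᵥ g' - ((g' ⬝ᵥ (H *ᵥ g')) / (g ⬝ᵥ (H *ᵥ g))) • d) := by
  have hsg' : (α • d) ⬝ᵥ g' = 0 := by rw [smul_dotProduct, dotProduct_comm, horth, smul_zero]
  have hsy : (α • d) ⬝ᵥ (g' - g) = α * (g ⬝ᵥ (H *ᵥ g)) := by
    rw [smul_dotProduct, dir_dotProduct_sub hd horth, smul_eq_mul]
  have hHy : H *ᵥ (g' - g) = H *ᵥ g' + d := by rw [mulVec_sub, hd, sub_eq_add_neg]
  have hwg' : (H *ᵥ g' + d) ⬝ᵥ g' = g' ⬝ᵥ (H *ᵥ g') := by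
    rw [add_dotProduct, dotProduct_comm d, horth, add_zero, dotProduct_comm]
  have hv : broydenVec H (α • d) (g' - g) ⬝ᵥ g' =
      -(g' ⬝ᵥ (H *ᵥ g')) / (g ⬝ᵥ (H *ᵥ g) + g' ⬝ᵥ (H *ᵥ g')) := by
    simp only [broydenVec, sub_dotProduct, smul_dotProduct, hsg', hHy, hwg', hsy,
      ← sub_dotProduct_mulVec_sub hH hd horth, smul_eq_mul]
    ring
  rw [broydenUpdate_mulVec, hv, broydenVec, hsg', hsy, hHy, hwg', ← hHy,
    sub_dotProduct_mulVec_sub hH hd horth, hHy]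
  match_scalars <;> field_simp <;> ring

end QuasiNewtonStep

noncomputable def exactStepSize (A : Matrix ι ι ℝ) (g d : ι → ℝ) : ℝ :=
  -(g ⬝ᵥ d) / (d ⬝ᵥ (A *ᵥ d))

lemma exactStepSize_smul_smul (A : Matrix ι ι ℝ) (g d : ι → ℝ) {c : ℝ} (hc : c ≠ 0) :
    exactStepSize A g (c • d) • (c • d) = exactStepSize A g d • d := by
  rw [smul_smul]
  congr 1
  simp only [exactStepSize, mulVec_smul, dotProduct_smul, smul_dotProduct, smul_eq_mul]
  rcases eq_or_ne (d ⬝ᵥ (A *ᵥ d)) 0 with h | h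
  · simp [h]
  · field_simp

lemma exactStepSize_pos {A : Matrix ι ι ℝ} (hA : A.PosDef) {g d : ι → ℝ} (hgd : g ⬝ᵥ d < 0) :
    0 < exactStepSize A g d := by
  have hd : d ≠ 0 := by rintro rfl; simp at hgd
  exact div_pos (neg_pos.mpr hgd) (hA.dotProduct_mulVec_self_pos hd)

structure IsExactLineSearch (A : Matrix ι ι ℝ) (b : ι → ℝ) (x d g : ℕ → ι → ℝ) : Prop where
  grad_eq : ∀ k, g k = A *ᵥ x k - b
  x_succ : ∀ k, x (k + 1) = x k + exactStepSize A (g k) (d k) • d k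

namespace IsExactLineSearch

variable {A : Matrix ι ι ℝ} {b : ι → ℝ} {x d g : ℕ → ι → ℝ} {k : ℕ}

lemma grad_succ (hL : IsExactLineSearch A b x d g) (k : ℕ) :
    g (k + 1) = g k + exactStepSize A (g k) (d k) • (A *ᵥ d k) := by
  rw [hL.grad_eq (k + 1), hL.x_succ, mulVec_add, mulVec_smul, hL.grad_eq k]
  abel

lemma grad_succ_dotProduct_dir (hL : IsExactLineSearch A b x d g) (hA : A.PosDef) (k : ℕ) :
    g (k + 1) ⬝ᵥ d k = 0 := by
  rcases eq_or_ne (d k) 0 with hd | hd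
  · simp [hd]
  have hκ := (hA.dotProduct_mulVec_self_pos hd).ne'
  rw [hL.grad_succ, add_dotProduct, smul_dotProduct, hA.isHermitian.mulVec_dotProduct,
    exactStepSize, smul_eq_mul, div_mul_cancel₀ _ hκ, add_neg_cancel]

lemma grad_succ_dotProduct_of_conj (hL : IsExactLineSearch A b x d g) (hA : A.IsHermitian)
    {k i : ℕ} (hconj : d k ⬝ᵥ (A *ᵥ d i) = 0) : g (k + 1) ⬝ᵥ d i = g k ⬝ᵥ d i := by
  rw [hL.grad_succ, add_dotProduct, smul_dotProduct, hA.mulVec_dotProduct, hconj, smul_zero,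
    add_zero]

lemma mulVec_dir (hL : IsExactLineSearch A b x d g) (hα : exactStepSize A (g k) (d k) ≠ 0) :
    A *ᵥ d k = (exactStepSize A (g k) (d k))⁻¹ • (g (k + 1) - g k) := by
  rw [hL.grad_succ, add_sub_cancel_left, smul_smul, inv_mul_cancel₀ hα, one_smul]

end IsExactLineSearch

noncomputable def pcgDir (P : Matrix ι ι ℝ) (g : ℕ → ι → ℝ) : ℕ → ι → ℝ
  | 0 => -(P *ᵥ g 0)
  | k + 1 => -(P *ᵥ g (k + 1)) +
      ((g (k + 1) ⬝ᵥ (P *ᵥ g (k + 1))) / (g k ⬝ᵥ (P *ᵥ g k))) • pcgDir P g k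

lemma dotProduct_mulVec_eq_zero_of_pcgDir (P : Matrix ι ι ℝ) (g : ℕ → ι → ℝ) {z : ι → ℝ}
    {j : ℕ} (hz : ∀ i ≤ j, z ⬝ᵥ pcgDir P g i = 0) : z ⬝ᵥ (P *ᵥ g j) = 0 := by
  cases j with
  | zero => simpa [pcgDir] using hz 0 le_rfl
  | succ j =>
    have h := hz (j + 1) le_rfl
    rw [pcgDir, dotProduct_add, dotProduct_smul, hz j j.le_succ, smul_zero, add_zero,
      dotProduct_neg, neg_eq_zero] at h
    exact h

lemma dotProduct_pcgDir_self (P : Matrix ι ι ℝ) (g : ℕ → ι → ℝ) {k : ℕ}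
    (hk : ∀ i < k, g k ⬝ᵥ pcgDir P g i = 0) : g k ⬝ᵥ pcgDir P g k = -(g k ⬝ᵥ (P *ᵥ g k)) := by
  cases k with
  | zero => simp [pcgDir]
  | succ k => simp [pcgDir, hk k k.lt_succ_self]

noncomputable def broydenScale (P : Matrix ι ι ℝ) (g : ℕ → ι → ℝ) (φ : ℕ → ℝ) : ℕ → ℝ
  | 0 => 1
  | k + 1 =>
    (broydenScale P g φ k * (g k ⬝ᵥ (P *ᵥ g k)) + φ k * (g (k + 1) ⬝ᵥ (P *ᵥ g (k + 1)))) /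
      (broydenScale P g φ k * (g k ⬝ᵥ (P *ᵥ g k)) + g (k + 1) ⬝ᵥ (P *ᵥ g (k + 1)))

structure IsPCG (A P : Matrix ι ι ℝ) (b : ι → ℝ) (x d g : ℕ → ι → ℝ) : Prop
    extends IsExactLineSearch A b x d g where
  dir_zero : d 0 = -(P *ᵥ g 0)
  dir_succ : ∀ k, d (k + 1) = -(P *ᵥ g (k + 1)) +
    ((g (k + 1) ⬝ᵥ (P *ᵥ g (k + 1))) / (g k ⬝ᵥ (P *ᵥ g k))) • d k

/-- Exact line search is blind to the length of the search direction. -/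
lemma IsPCG.eq_of_dir_eq_smul_pcgDir {A P : Matrix ι ι ℝ} {b : ι → ℝ}
    {x d g x' d' g' : ℕ → ι → ℝ}
    (hC : IsPCG A P b x d g) (hL : IsExactLineSearch A b x' d' g') (hx0 : x 0 = x' 0)
    {γ : ℕ → ℝ} (hγ : ∀ k, (∀ i ≤ k, g' i ≠ 0) → γ k ≠ 0 ∧ d' k = γ k • pcgDir P g' k) :
    ∀ k, (∀ i ≤ k, g' i ≠ 0) → x k = x' k ∧ d k = pcgDir P g' k := by
  have hg {k} (hx : x k = x' k) : g k = g' k := by rw [hC.grad_eq, hL.grad_eq, hx]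
  intro k hk
  induction k with
  | zero => exact ⟨hx0, by rw [hC.dir_zero, hg hx0, pcgDir]⟩
  | succ k ih =>
    obtain ⟨hx, hd⟩ := ih fun i hi => hk i (by omega)
    obtain ⟨hγk, hd'⟩ := hγ k fun i hi => hk i (by omega)
    have hx' : x (k + 1) = x' (k + 1) := by
      rw [hC.x_succ, hL.x_succ, hx, hd, hg hx, hd', exactStepSize_smul_smul _ _ _ hγk]
    exact ⟨hx', by rw [hC.dir_succ, hd, hg hx, hg hx', pcgDir]⟩

structure IsBroyden (A H0 : Matrix ι ι ℝ) (b : ι → ℝ) (φ : ℕ → ℝ) (x d s y g : ℕ → ι → ℝ)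
    (H : ℕ → Matrix ι ι ℝ) : Prop extends IsExactLineSearch A b x d g where
  H_zero : H 0 = H0
  dir_eq : ∀ k, d k = -(H k *ᵥ g k)
  s_eq : ∀ k, s k = x (k + 1) - x k
  y_eq : ∀ k, y k = A *ᵥ s k
  H_succ : ∀ k, H (k + 1) = broydenUpdate (H k) (s k) (y k) (φ k)

namespace IsBroyden

open QuasiNewtonStep

variable {A H0 : Matrix ι ι ℝ} {b : ι → ℝ} {φ : ℕ → ℝ} {x d s y g : ℕ → ι → ℝ}
  {H : ℕ → Matrix ι ι ℝ}

lemma s_eq_smul (hB : IsBroyden A H0 b φ x d s y g H) (k : ℕ) :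
    s k = exactStepSize A (g k) (d k) • d k := by
  rw [hB.s_eq, hB.x_succ, add_sub_cancel_left]

lemma y_eq_sub (hB : IsBroyden A H0 b φ x d s y g H) (k : ℕ) : y k = g (k + 1) - g k := by
  rw [hB.y_eq, hB.s_eq, mulVec_sub, hB.grad_eq, hB.grad_eq, sub_sub_sub_cancel_right]

lemma H_succ_eq (hB : IsBroyden A H0 b φ x d s y g H) (k : ℕ) : H (k + 1) =
    broydenUpdate (H k) (exactStepSize A (g k) (d k) • d k) (g (k + 1) - g k) (φ k) := by
  rw [hB.H_succ, hB.s_eq_smul, hB.y_eq_sub]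

lemma grad_dotProduct_dir (hB : IsBroyden A H0 b φ x d s y g H) (k : ℕ) :
    g k ⬝ᵥ d k = -(g k ⬝ᵥ (H k *ᵥ g k)) := by
  rw [hB.dir_eq, dotProduct_neg]

lemma dir_ne_zero (hB : IsBroyden A H0 b φ x d s y g H) (hk : (H k).PosDef) (hg : g k ≠ 0) :
    d k ≠ 0 := by
  intro hd
  have h := hB.grad_dotProduct_dir k
  rw [hd, dotProduct_zero, zero_eq_neg] at h
  exact (hk.dotProduct_mulVec_self_pos hg).ne' h

lemma exactStepSize_pos (hB : IsBroyden A H0 b φ x d s y g H) (hA : A.PosDef)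
    (hk : (H k).PosDef) (hg : g k ≠ 0) : 0 < exactStepSize A (g k) (d k) := by
  refine _root_.exactStepSize_pos hA ?_
  rw [hB.grad_dotProduct_dir, neg_neg_iff_pos]
  exact hk.dotProduct_mulVec_self_pos hg

lemma curvature_pos (hB : IsBroyden A H0 b φ x d s y g H) (hA : A.PosDef)
    (hk : (H k).PosDef) (hg : g k ≠ 0) : 0 < y k ⬝ᵥ (H k *ᵥ y k) := by
  rw [hB.y_eq_sub, sub_dotProduct_mulVec_sub hk.isHermitian (hB.dir_eq k)
    (hB.grad_succ_dotProduct_dir hA k)]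
  have := hk.dotProduct_mulVec_self_pos hg
  have : 0 ≤ g (k + 1) ⬝ᵥ (H k *ᵥ g (k + 1)) := by
    simpa using hk.posSemidef.dotProduct_mulVec_nonneg (g (k + 1))
  linarith

lemma s_dotProduct_y (hB : IsBroyden A H0 b φ x d s y g H) (hA : A.PosDef) (k : ℕ) :
    s k ⬝ᵥ y k = exactStepSize A (g k) (d k) * (g k ⬝ᵥ (H k *ᵥ g k)) := by
  rw [hB.s_eq_smul, hB.y_eq_sub, smul_dotProduct,
    dir_dotProduct_sub (hB.dir_eq k) (hB.grad_succ_dotProduct_dir hA k), smul_eq_mul]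

lemma s_dotProduct_y_pos (hB : IsBroyden A H0 b φ x d s y g H) (hA : A.PosDef)
    (hk : (H k).PosDef) (hg : g k ≠ 0) : 0 < s k ⬝ᵥ y k := by
  rw [hB.s_dotProduct_y hA]
  exact mul_pos (hB.exactStepSize_pos hA hk hg) (hk.dotProduct_mulVec_self_pos hg)

lemma mulVec_y (hB : IsBroyden A H0 b φ x d s y g H) (hA : A.PosDef)
    (hk : (H k).PosDef) (hg : g k ≠ 0) : H (k + 1) *ᵥ y k = s k := by
  rw [hB.H_succ]
  exact broydenUpdate_mulVec_self _ _ _ _ (hB.s_dotProduct_y_pos hA hk hg).ne'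
    (hB.curvature_pos hA hk hg).ne'

lemma posDef_succ [DecidableEq ι] (hB : IsBroyden A H0 b φ x d s y g H) (hA : A.PosDef)
    (hφ : broydenCriticalParam (H k) (s k) (y k) < φ k) (hk : (H k).PosDef) (hg : g k ≠ 0)
    (hg' : g (k + 1) ≠ 0) : (H (k + 1)).PosDef := by
  have hρ := hk.dotProduct_mulVec_self_pos hg
  have hτ := hk.dotProduct_mulVec_self_pos hg'
  have hα := hB.exactStepSize_pos hA hk hg
  have horth := hB.grad_succ_dotProduct_dir hA k
  rw [hB.H_succ]
  refine hk.broydenUpdate (hB.s_dotProduct_y_pos hA hk hg) ?_ hφ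
  have hsHs : s k ⬝ᵥ ((H k)⁻¹ *ᵥ s k) =
      exactStepSize A (g k) (d k) ^ 2 * (g k ⬝ᵥ (H k *ᵥ g k)) := by
    rw [hB.s_eq_smul, mulVec_smul, inv_mulVec_dir hk.isUnit (hB.dir_eq k),
      dotProduct_smul, smul_dotProduct, dotProduct_neg, dotProduct_comm, hB.grad_dotProduct_dir,
      neg_neg, smul_eq_mul, smul_eq_mul]
    ring
  rw [hB.s_dotProduct_y hA, hsHs, hB.y_eq_sub,
    sub_dotProduct_mulVec_sub hk.isHermitian (hB.dir_eq k) horth]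
  have : 0 < exactStepSize A (g k) (d k) ^ 2 * (g k ⬝ᵥ (H k *ᵥ g k)) *
    (g (k + 1) ⬝ᵥ (H k *ᵥ g (k + 1))) := by positivity
  linarith

structure Invariant (A H0 : Matrix ι ι ℝ) (φ : ℕ → ℝ) (d g : ℕ → ι → ℝ)
    (H : ℕ → Matrix ι ι ℝ) (k : ℕ) : Prop where
  posDef : ∀ i ≤ k, (H i).PosDef
  grad_dotProduct_dir : ∀ i < k, g k ⬝ᵥ d i = 0
  conj : ∀ i < k, d k ⬝ᵥ (A *ᵥ d i) = 0
  mulVec_eq : ∀ z, (∀ i ≤ k, z ⬝ᵥ d i = 0) → H k *ᵥ z = H0 *ᵥ z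
  dir_eq : ∀ i ≤ k, d i = broydenScale H0 g φ i • pcgDir H0 g i

lemma scale_ne_zero (hB : IsBroyden A H0 b φ x d s y g H) (hpd : ∀ i ≤ k, (H i).PosDef)
    (hdir : ∀ i ≤ k, d i = broydenScale H0 g φ i • pcgDir H0 g i) (hg : ∀ i ≤ k, g i ≠ 0)
    {i : ℕ} (hi : i ≤ k) : broydenScale H0 g φ i ≠ 0 := fun h =>
  hB.dir_ne_zero (hpd i hi) (hg i hi) (by rw [hdir i hi, h, zero_smul])

lemma dotProduct_pcgDir_eq_zero (hB : IsBroyden A H0 b φ x d s y g H)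
    (hpd : ∀ i ≤ k, (H i).PosDef)
    (hdir : ∀ i ≤ k, d i = broydenScale H0 g φ i • pcgDir H0 g i) (hg : ∀ i ≤ k, g i ≠ 0)
    {z : ι → ℝ} {i : ℕ} (hi : i ≤ k) (hz : z ⬝ᵥ d i = 0) : z ⬝ᵥ pcgDir H0 g i = 0 := by
  rw [hdir i hi, dotProduct_smul, smul_eq_mul, mul_eq_zero] at hz
  exact hz.resolve_left (hB.scale_ne_zero hpd hdir hg hi)

lemma dotProduct_H0_grad_eq_zero (hB : IsBroyden A H0 b φ x d s y g H)
    (hpd : ∀ i ≤ k, (H i).PosDef)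
    (hdir : ∀ i ≤ k, d i = broydenScale H0 g φ i • pcgDir H0 g i) (hg : ∀ i ≤ k, g i ≠ 0)
    {z : ι → ℝ} {j : ℕ} (hj : j ≤ k) (hz : ∀ i ≤ j, z ⬝ᵥ d i = 0) : z ⬝ᵥ (H0 *ᵥ g j) = 0 :=
  dotProduct_mulVec_eq_zero_of_pcgDir _ _ fun i hi =>
    hB.dotProduct_pcgDir_eq_zero hpd hdir hg (hi.trans hj) (hz i hi)

lemma quad_eq_scale_mul (hB : IsBroyden A H0 b φ x d s y g H) (hI : Invariant A H0 φ d g H k)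
    (hg : ∀ i ≤ k, g i ≠ 0) :
    g k ⬝ᵥ (H k *ᵥ g k) = broydenScale H0 g φ k * (g k ⬝ᵥ (H0 *ᵥ g k)) := by
  have hD : ∀ i < k, g k ⬝ᵥ pcgDir H0 g i = 0 := fun i hi =>
    hB.dotProduct_pcgDir_eq_zero hI.posDef hI.dir_eq hg hi.le (hI.grad_dotProduct_dir i hi)
  rw [← neg_neg (g k ⬝ᵥ _), ← hB.grad_dotProduct_dir, hI.dir_eq k le_rfl, dotProduct_smul,
    dotProduct_pcgDir_self _ _ hD, smul_eq_mul, mul_neg, neg_neg]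

lemma grad_succ_dotProduct_dir_of_le (hB : IsBroyden A H0 b φ x d s y g H) (hA : A.PosDef)
    (hI : Invariant A H0 φ d g H k) {i : ℕ} (hi : i ≤ k) : g (k + 1) ⬝ᵥ d i = 0 := by
  rcases hi.lt_or_eq with hi | rfl
  · rw [hB.grad_succ_dotProduct_of_conj hA.isHermitian (hI.conj i hi)]
    exact hI.grad_dotProduct_dir i hi
  · exact hB.grad_succ_dotProduct_dir hA i

lemma mulVec_grad_succ (hB : IsBroyden A H0 b φ x d s y g H) (hA : A.PosDef)
    (hI : Invariant A H0 φ d g H k) : H k *ᵥ g (k + 1) = H0 *ᵥ g (k + 1) :=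
  hI.mulVec_eq _ fun _ hi => hB.grad_succ_dotProduct_dir_of_le hA hI hi

lemma dir_succ (hB : IsBroyden A H0 b φ x d s y g H) (hA : A.PosDef)
    (hI : Invariant A H0 φ d g H k) (hg : ∀ i ≤ k, g i ≠ 0) :
    d (k + 1) = broydenScale H0 g φ (k + 1) • pcgDir H0 g (k + 1) := by
  have hk := hI.posDef k le_rfl
  have hρ := hk.dotProduct_mulVec_self_pos (hg k le_rfl)
  have hτ : 0 ≤ g (k + 1) ⬝ᵥ (H k *ᵥ g (k + 1)) := by
    simpa using hk.posSemidef.dotProduct_mulVec_nonneg (g (k + 1))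
  have hγ := hB.scale_ne_zero hI.posDef hI.dir_eq hg le_rfl
  have hr : g k ⬝ᵥ (H0 *ᵥ g k) ≠ 0 := by
    rintro h
    rw [hB.quad_eq_scale_mul hI hg, h, mul_zero] at hρ
    exact lt_irrefl _ hρ
  rw [hB.dir_eq, hB.H_succ_eq, broydenUpdate_mulVec_grad hk.isHermitian (hB.dir_eq k)
    (hB.grad_succ_dotProduct_dir hA k) (hB.exactStepSize_pos hA hk (hg k le_rfl)).ne' hρ.ne'
    (by linarith), hB.mulVec_grad_succ hA hI, hB.quad_eq_scale_mul hI hg, hI.dir_eq k le_rfl,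
    broydenScale, pcgDir]
  match_scalars <;> field_simp

lemma conj_succ_self (hB : IsBroyden A H0 b φ x d s y g H) (hA : A.PosDef)
    (hk : (H k).PosDef) (hg : g k ≠ 0) : d (k + 1) ⬝ᵥ (A *ᵥ d k) = 0 := by
  have hα := hB.exactStepSize_pos hA hk hg
  have hH : (H (k + 1)).IsHermitian := by
    rw [hB.H_succ]
    exact hk.isHermitian.broydenUpdate _ _ _
  -- the secant equation `H (k + 1) y k = s k` turns this into exact line search at step `k`
  rw [hB.mulVec_dir hα.ne', ← hB.y_eq_sub, hB.dir_eq, neg_dotProduct, dotProduct_smul,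
    hH.mulVec_dotProduct, hB.mulVec_y hA hk hg, hB.s_eq_smul, dotProduct_smul,
    hB.grad_succ_dotProduct_dir hA, smul_zero, smul_zero, neg_zero]

lemma conj_succ_of_lt (hB : IsBroyden A H0 b φ x d s y g H) (hA : A.PosDef)
    (hH0 : H0.IsHermitian) (hI : Invariant A H0 φ d g H k) (hg : ∀ i ≤ k, g i ≠ 0)
    (hdir : d (k + 1) = broydenScale H0 g φ (k + 1) • pcgDir H0 g (k + 1)) {i : ℕ} (hi : i < k) :
    d (k + 1) ⬝ᵥ (A *ᵥ d i) = 0 := by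
  have hα := hB.exactStepSize_pos hA (hI.posDef i hi.le) (hg i hi.le)
  have hgrad {j : ℕ} (hj : j ≤ k) : g (k + 1) ⬝ᵥ (H0 *ᵥ g j) = 0 :=
    hB.dotProduct_H0_grad_eq_zero hI.posDef hI.dir_eq hg hj fun l hl =>
      hB.grad_succ_dotProduct_dir_of_le hA hI (hl.trans hj)
  have hH0g : (H0 *ᵥ g (k + 1)) ⬝ᵥ (A *ᵥ d i) = 0 := by
    rw [hB.mulVec_dir hα.ne', dotProduct_smul, dotProduct_sub, hH0.mulVec_dotProduct,
      hH0.mulVec_dotProduct, hgrad hi, hgrad hi.le, sub_zero, smul_zero]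
  have hD : pcgDir H0 g k ⬝ᵥ (A *ᵥ d i) = 0 := by
    have := hI.conj i hi
    rw [hI.dir_eq k le_rfl, smul_dotProduct, smul_eq_mul, mul_eq_zero] at this
    exact this.resolve_left (hB.scale_ne_zero hI.posDef hI.dir_eq hg le_rfl)
  rw [hdir, pcgDir, smul_dotProduct, add_dotProduct, neg_dotProduct, smul_dotProduct, hH0g, hD]
  simp

lemma mulVec_eq_succ (hB : IsBroyden A H0 b φ x d s y g H) (hA : A.PosDef)
    (hI : Invariant A H0 φ d g H k) (hpd : ∀ i ≤ k + 1, (H i).PosDef)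
    (hdir : ∀ i ≤ k + 1, d i = broydenScale H0 g φ i • pcgDir H0 g i)
    (hg : ∀ i ≤ k + 1, g i ≠ 0) {z : ι → ℝ} (hz : ∀ i ≤ k + 1, z ⬝ᵥ d i = 0) :
    H (k + 1) *ᵥ z = H0 *ᵥ z := by
  have hzk : ∀ i ≤ k, z ⬝ᵥ d i = 0 := fun i hi => hz i (hi.trans k.le_succ)
  rw [hB.H_succ, broydenUpdate_mulVec_of_orthogonal, hI.mulVec_eq z hzk]
  · rw [hB.s_eq_smul, smul_dotProduct, dotProduct_comm, hzk k le_rfl, smul_zero]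
  · rw [dotProduct_comm, hB.y_eq_sub, mulVec_sub, dotProduct_sub, hB.mulVec_grad_succ hA hI,
      hB.dotProduct_H0_grad_eq_zero hpd hdir hg le_rfl hz, ← neg_neg (H k *ᵥ g k),
      ← hB.dir_eq, dotProduct_neg, hzk k le_rfl, neg_zero, sub_zero]

lemma invariant_zero (hB : IsBroyden A H0 b φ x d s y g H) (hH0 : H0.PosDef) :
    Invariant A H0 φ d g H 0 where
  posDef i hi := by rw [Nat.le_zero.mp hi, hB.H_zero]; exact hH0
  grad_dotProduct_dir i hi := absurd hi (Nat.not_lt_zero i)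
  conj i hi := absurd hi (Nat.not_lt_zero i)
  mulVec_eq z _ := by rw [hB.H_zero]
  dir_eq i hi := by rw [Nat.le_zero.mp hi, hB.dir_eq, hB.H_zero, broydenScale, pcgDir, one_smul]

lemma invariant_succ [DecidableEq ι] (hB : IsBroyden A H0 b φ x d s y g H) (hA : A.PosDef)
    (hH0 : H0.IsHermitian) (hφ : broydenCriticalParam (H k) (s k) (y k) < φ k)
    (hI : Invariant A H0 φ d g H k) (hg : ∀ i ≤ k + 1, g i ≠ 0) :
    Invariant A H0 φ d g H (k + 1) := by
  have hgk : ∀ i ≤ k, g i ≠ 0 := fun i hi => hg i (hi.trans k.le_succ)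
  have hpd : ∀ i ≤ k + 1, (H i).PosDef := fun i hi => (Nat.le_succ_iff.mp hi).elim
    (hI.posDef i) fun h => h ▸
      hB.posDef_succ hA hφ (hI.posDef k le_rfl) (hgk k le_rfl) (hg (k + 1) le_rfl)
  have hdir : ∀ i ≤ k + 1, d i = broydenScale H0 g φ i • pcgDir H0 g i := fun i hi =>
    (Nat.le_succ_iff.mp hi).elim (hI.dir_eq i) fun h => h ▸ hB.dir_succ hA hI hgk
  refine ⟨hpd, fun i hi => hB.grad_succ_dotProduct_dir_of_le hA hI (Nat.lt_succ_iff.mp hi),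
    fun i hi => ?_, fun z hz => hB.mulVec_eq_succ hA hI hpd hdir hg hz, hdir⟩
  rcases (Nat.lt_succ_iff.mp hi).lt_or_eq with hi | rfl
  · exact hB.conj_succ_of_lt hA hH0 hI hgk (hdir (k + 1) le_rfl) hi
  · exact hB.conj_succ_self hA (hI.posDef i le_rfl) (hgk i le_rfl)

lemma invariant [DecidableEq ι] (hB : IsBroyden A H0 b φ x d s y g H) (hA : A.PosDef)
    (hH0 : H0.PosDef) (hφ : ∀ k, broydenCriticalParam (H k) (s k) (y k) < φ k) :
    ∀ k, (∀ i ≤ k, g i ≠ 0) → Invariant A H0 φ d g H k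
  | 0, _ => hB.invariant_zero hH0
  | k + 1, hg => hB.invariant_succ hA hH0.isHermitian (hφ k)
      (hB.invariant hA hH0 hφ k fun i hi => hg i (hi.trans k.le_succ)) hg

lemma exists_grad_eq_zero [DecidableEq ι] (hB : IsBroyden A H0 b φ x d s y g H) (hA : A.PosDef)
    (hH0 : H0.PosDef) (hφ : ∀ k, broydenCriticalParam (H k) (s k) (y k) < φ k) :
    ∃ k ≤ Fintype.card ι, g k = 0 := by
  by_contra! hg
  have horth {i j : ℕ} (hij : i < j) (hj : j ≤ Fintype.card ι) : g j ⬝ᵥ (H0 *ᵥ g i) = 0 := by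
    have hI := hB.invariant hA hH0 hφ j fun l hl => hg l (hl.trans hj)
    exact hB.dotProduct_H0_grad_eq_zero hI.posDef hI.dir_eq (fun l hl => hg l (hl.trans hj))
      hij.le fun l hl => hI.grad_dotProduct_dir l (hl.trans_lt hij)
  have := hH0.card_le_of_pairwise_orthogonal (v := fun i : Fin (Fintype.card ι + 1) => g i)
    (fun i => hg i (Nat.lt_succ_iff.mp i.2)) fun i j hij => by
      rcases lt_or_gt_of_ne (Fin.val_ne_of_ne hij) with h | h
      · rw [hH0.isHermitian.dotProduct_mulVec_comm]
        exact horth h (Nat.lt_succ_iff.mp j.2)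
      · exact horth h (Nat.lt_succ_iff.mp i.2)
  simp at this

end IsBroyden

/-- On a strictly convex quadratic, a Broyden-class method with
`φ k > φᶜ k` has positive curvature `y_kᵀ H_k y_k > 0` at every iteration, its
directions are proportional to the PCG directions with the explicit recurrence for the
coefficients, and quadratic termination occurs. -/
theorem broyden_pcg_strictly_convex
    (n : ℕ) (A H0 : Matrix (Fin n) (Fin n) ℝ) (b x0 : Fin n → ℝ)
    (hA : A.PosDef) (hH0 : H0.PosDef)
    -- PCG sequences with preconditioner H0
    (xC dC gC : ℕ → Fin n → ℝ)
    (hgC : ∀ k, gC k = A *ᵥ xC k - b)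
    (hxC0 : xC 0 = x0)
    (hdC0 : dC 0 = -(H0 *ᵥ gC 0))
    (hdC : ∀ k, dC (k+1) = -(H0 *ᵥ gC (k+1)) +
      ((gC (k+1) ⬝ᵥ (H0 *ᵥ gC (k+1))) / (gC k ⬝ᵥ (H0 *ᵥ gC k))) • dC k)
    (hxC : ∀ k, xC (k+1) = xC k +
      (-(gC k ⬝ᵥ dC k) / (dC k ⬝ᵥ (A *ᵥ dC k))) • dC k)
    -- Broyden-class method with exact line search
    (φ : ℕ → ℝ)
    (xB dB sB yB gB : ℕ → Fin n → ℝ) (H : ℕ → Matrix (Fin n) (Fin n) ℝ)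
    (hgB : ∀ k, gB k = A *ᵥ xB k - b)
    (hxB0 : xB 0 = x0)
    (hH00 : H 0 = H0)
    (hdB : ∀ k, dB k = -(H k *ᵥ gB k))
    (hxB : ∀ k, xB (k+1) = xB k +
      (-(gB k ⬝ᵥ dB k) / (dB k ⬝ᵥ (A *ᵥ dB k))) • dB k)
    (hsB : ∀ k, sB k = xB (k+1) - xB k)
    (hyB : ∀ k, yB k = A *ᵥ sB k)
    (hH : ∀ k, H (k+1) = H k
      + (1 / (sB k ⬝ᵥ yB k)) • vecMulVec (sB k) (sB k)
      - (1 / (yB k ⬝ᵥ (H k *ᵥ yB k))) • vecMulVec (H k *ᵥ yB k) (H k *ᵥ yB k)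
      + (φ k * (yB k ⬝ᵥ (H k *ᵥ yB k))) •
          vecMulVec
            ((1 / (sB k ⬝ᵥ yB k)) • sB k - (1 / (yB k ⬝ᵥ (H k *ᵥ yB k))) • (H k *ᵥ yB k))
            ((1 / (sB k ⬝ᵥ yB k)) • sB k - (1 / (yB k ⬝ᵥ (H k *ᵥ yB k))) • (H k *ᵥ yB k)))
    -- the Broyden parameter exceeds the singular value at every iteration
    (hphi : ∀ k, φ k > (yB k ⬝ᵥ sB k) ^ 2 /
      ((yB k ⬝ᵥ sB k) ^ 2 - (yB k ⬝ᵥ (H k *ᵥ yB k)) * (sB k ⬝ᵥ ((H k)⁻¹ *ᵥ sB k)))) :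
    -- positive curvature at every iteration (so y_kᵀH_ky_k ≠ 0 holds automatically)
    (∀ k, (∀ i, i ≤ k → gB i ≠ 0) → 0 < yB k ⬝ᵥ (H k *ᵥ yB k)) ∧
    -- proportionality with the explicit recurrence
    (∃ γ : ℕ → ℝ, γ 0 = 1 ∧
      (∀ k, (∀ i, i ≤ k → gB i ≠ 0) → γ k ≠ 0 ∧ dB k = γ k • dC k) ∧
      (∀ k, (∀ i, i ≤ k + 1 → gB i ≠ 0) →
        γ (k+1) =
          (γ k * (gB k ⬝ᵥ (H0 *ᵥ gB k)) + φ k * (gB (k+1) ⬝ᵥ (H0 *ᵥ gB (k+1)))) /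
          (γ k * (gB k ⬝ᵥ (H0 *ᵥ gB k)) + (gB (k+1) ⬝ᵥ (H0 *ᵥ gB (k+1)))))) ∧
    -- quadratic termination
    (∃ k, k ≤ n ∧ A *ᵥ xB k = b) := by
  have hB : IsBroyden A H0 b φ xB dB sB yB gB H :=
    { grad_eq := hgB, x_succ := hxB, H_zero := hH00, dir_eq := hdB, s_eq := hsB, y_eq := hyB,
      H_succ := hH }
  have hC : IsPCG A H0 b xC dC gC :=
    { grad_eq := hgC, x_succ := hxC, dir_zero := hdC0, dir_succ := hdC }
  have hI := hB.invariant hA hH0 hphi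
  have hγ (k : ℕ) (hk : ∀ i ≤ k, gB i ≠ 0) : broydenScale H0 gB φ k ≠ 0 ∧
      dB k = broydenScale H0 gB φ k • pcgDir H0 gB k :=
    ⟨hB.scale_ne_zero (hI k hk).posDef (hI k hk).dir_eq hk le_rfl, (hI k hk).dir_eq k le_rfl⟩
  have hCB := hC.eq_of_dir_eq_smul_pcgDir hB.toIsExactLineSearch (hxC0.trans hxB0.symm) hγ
  refine ⟨fun k hk => hB.curvature_pos hA ((hI k hk).posDef k le_rfl) (hk k le_rfl),
    ⟨broydenScale H0 gB φ, rfl, fun k hk => ?_, fun k _ => rfl⟩, ?_⟩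
  · rw [(hCB k hk).2]
    exact hγ k hk
  · obtain ⟨k, hk, hg⟩ := hB.exists_grad_eq_zero hA hH0 hphi
    exact ⟨k, by simpa using hk, by rwa [hB.grad_eq, sub_eq_zero] at hg⟩
end

section
/- In DIOM applied to Ax = b with A symmetric, and q(x) = ½xᵀAx − bᵀx with gradient g_k = Ax_k − b = −r_k, suppose P_kᵀAP_k is symmetric positive definite for k = 1,…,j. Then g₀ᵀp₁ = −β/u_{1,1}, and for k ≥ 1, g_kᵀp_{k+1} = (−1)^{k−1} t_{k+1,k}|ζ_k| / (u_{k,k} u_{k+1,k+1}). In particular, the sign of g_kᵀp_{k+1} alternates with k, so p_{k+1} is not a descent direction for q at x_k for every k. -/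
/-!
Write `T_j = L_j U_j` and `P_j = V_j U_j⁻¹`. Then `P_jᵀ A P_j = U_j⁻ᵀ L_j` is lower triangular;
being symmetric it is diagonal, with diagonal `1 / u_{i,i}`, so positive definiteness makes the
directions `A`-conjugate and all pivots positive. Conjugacy makes `g_k ⬝ p_{k+1}` independent of the
iterate, so it equals `g_0 ⬝ p_{k+1} = -β v₁ ⬝ p_{k+1}`. Since `T_j` is tridiagonal, `U_j` is upper
bidiagonal with superdiagonal `t_{k+1,k}`, which gives the recurrence
`v_{k+1} = u_{k+1,k+1} p_{k+1} + t_{k+1,k} p_k`; dotting it with `v₁` shows that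
`β v₁ ⬝ p_k = ζ_k / u_{k,k}`. Finally `ζ_{k+1} = -(t_{k+1,k} / u_{k,k}) ζ_k` with positive factors,
so the signs of the `ζ_k` alternate.
-/

open Matrix

namespace Matrix

variable {R : Type*}

def IsLowerHessenberg [Zero R] {m : ℕ} (M : Matrix (Fin m) (Fin m) R) : Prop :=
  ∀ i l : Fin m, (i : ℕ) + 1 < l → M i l = 0

theorem IsLowerTriangular.isDiag_of_isSymm {ι : Type*} [LinearOrder ι] [Zero R]
    {M : Matrix ι ι R} (hM : M.IsLowerTriangular) (hsymm : M.IsSymm) : M.IsDiag := by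
  intro i l hil
  rcases hil.lt_or_gt with h | h
  · exact hM h
  · rw [← hsymm.apply i l]
    exact hM h

theorem IsLowerTriangular.mul_apply_eq_right {ι : Type*} [Fintype ι] [LinearOrder ι]
    [NonAssocSemiring R] {L U : Matrix ι ι R} (hL : L.IsLowerTriangular) {i l : ι}
    (hLi : L i i = 1) (hU : ∀ q < i, U q l = 0) : (L * U) i l = U i l := by
  rw [mul_apply, Fintype.sum_eq_single i fun q hq => ?_, hLi, one_mul]
  rcases hq.lt_or_gt with h | h
  · rw [hU q h, mul_zero]
  · rw [hL h, zero_mul]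

section Hessenberg

variable {m : ℕ}

theorem IsLowerTriangular.isLowerHessenberg_of_mul [NonAssocSemiring R]
    {L U : Matrix (Fin m) (Fin m) R} (hL : L.IsLowerTriangular) (hLd : ∀ i, L i i = 1)
    (hLU : (L * U).IsLowerHessenberg) : U.IsLowerHessenberg := by
  intro i
  induction i using WellFoundedLT.induction with
  | _ i ih =>
    intro l hil
    rw [← hL.mul_apply_eq_right (hLd i) fun q hq => ih q hq l (by omega), hLU i l hil]

theorem IsLowerTriangular.mul_apply_superdiag [NonAssocSemiring R]
    {L U : Matrix (Fin m) (Fin m) R} (hL : L.IsLowerTriangular) (hLd : ∀ i, L i i = 1)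
    (hU : U.IsLowerHessenberg) {i l : Fin m} (hil : (l : ℕ) = i + 1) :
    (L * U) i l = U i l :=
  hL.mul_apply_eq_right (hLd i) fun q hq => hU q l (by omega)

variable {n : Type*} [NonUnitalCommSemiring R] {P : Matrix n (Fin m) R}
  {U : Matrix (Fin m) (Fin m) R}

theorem transpose_mul_of_val_eq_zero (hU : U.IsUpperTriangular) {c : Fin m}
    (hc : (c : ℕ) = 0) : (P * U)ᵀ c = U c c • Pᵀ c := by
  ext r
  rw [transpose_apply, mul_apply, Fintype.sum_eq_single c fun q hq => ?_]
  · simp [mul_comm]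
  · rw [hU (show c < q by rw [Fin.lt_def]; have := Fin.val_ne_of_ne hq; omega), mul_zero]

theorem transpose_mul_of_isLowerHessenberg (hU : U.IsUpperTriangular)
    (hUh : U.IsLowerHessenberg) {c' c : Fin m} (hc : (c : ℕ) = c' + 1) :
    (P * U)ᵀ c = U c c • Pᵀ c + U c' c • Pᵀ c' := by
  ext r
  rw [transpose_apply, mul_apply, Fintype.sum_eq_add c c' (Fin.ne_of_val_ne (by omega))
    fun q ⟨hqc, hqc'⟩ => ?_]
  · simp [mul_comm]
  · rcases (Fin.val_ne_of_ne hqc).lt_or_gt with h | h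
    · rw [hUh q c (by have := Fin.val_ne_of_ne hqc'; omega), mul_zero]
    · rw [hU (show c < q from h), mul_zero]

end Hessenberg

theorem transpose_mul_mul_apply {ι n : Type*} [Fintype ι] [Fintype n] [NonUnitalCommSemiring R]
    (V : Matrix n ι R) (A : Matrix n n R) (i l : ι) :
    (Vᵀ * A * V) i l = Vᵀ i ⬝ᵥ A *ᵥ Vᵀ l := by
  rw [Matrix.mul_assoc]
  simp [mul_apply, dotProduct, mulVec, Finset.mul_sum]

theorem IsSymm.dotProduct_mulVec_comm {n : Type*} [Fintype n] [CommSemiring R]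
    {A : Matrix n n R} (hA : A.IsSymm) (x y : n → R) : x ⬝ᵥ A *ᵥ y = y ⬝ᵥ A *ᵥ x := by
  rw [dotProduct_mulVec, ← mulVec_transpose, hA.eq, dotProduct_comm]

section Factorization

variable {ι n : Type*} [Fintype ι] [DecidableEq ι] [Fintype n]

theorem transpose_mul_mul_mul_inv [CommRing R] {V : Matrix n ι R} {A : Matrix n n R}
    {L U : Matrix ι ι R} (hU : IsUnit U.det) (hLU : Vᵀ * A * V = L * U) :
    (V * U⁻¹)ᵀ * A * (V * U⁻¹) = (U⁻¹)ᵀ * L := by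
  rw [transpose_mul,
    show (U⁻¹)ᵀ * Vᵀ * A * (V * U⁻¹) = (U⁻¹)ᵀ * (Vᵀ * A * V) * U⁻¹ by
      simp only [Matrix.mul_assoc],
    hLU, Matrix.mul_assoc, Matrix.mul_assoc, mul_nonsing_inv _ hU, Matrix.mul_one]

theorem isUnit_det_of_posDef_mul_inv [Nonempty ι] {V : Matrix n ι ℝ} {A : Matrix n n ℝ}
    {U : Matrix ι ι ℝ} (h : ((V * U⁻¹)ᵀ * A * (V * U⁻¹)).PosDef) : IsUnit U.det := by
  by_contra hU
  obtain ⟨i⟩ := ‹Nonempty ι›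
  have hpos := h.diag_pos (i := i)
  simp [nonsing_inv_apply_not_isUnit _ hU] at hpos

variable [LinearOrder ι]

theorem isDiag_of_eq_inv_transpose_mul [CommRing R] {M L U : Matrix ι ι R}
    (hU : U.IsUpperTriangular) (hUdet : IsUnit U.det) (hL : L.IsLowerTriangular)
    (hM : M.IsSymm) (hML : M = (U⁻¹)ᵀ * L) : M.IsDiag := by
  have := U.invertibleOfIsUnitDet hUdet
  have hlower : M.IsLowerTriangular :=
    hML ▸ (blockTriangular_inv_of_blockTriangular hU).transpose.mul hL
  exact hlower.isDiag_of_isSymm hM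

theorem diag_pos_of_posDef_eq_inv_transpose_mul {M L U : Matrix ι ι ℝ}
    (hU : U.IsUpperTriangular) (hUdet : IsUnit U.det) (hL : L.IsLowerTriangular)
    (hLd : ∀ i, L i i = 1) (hM : M.PosDef) (hML : M = (U⁻¹)ᵀ * L) (i : ι) : 0 < U i i := by
  have hdiag := isDiag_of_eq_inv_transpose_mul hU hUdet hL
    (isHermitian_iff_isSymm.mp hM.isHermitian) hML
  have hUM : Uᵀ * M = L := by
    rw [hML, ← Matrix.mul_assoc, ← transpose_mul, nonsing_inv_mul _ hUdet, transpose_one,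
      Matrix.one_mul]
  have hii : U i i * M i i = 1 := by
    rw [← hLd i, ← hUM, mul_apply, Fintype.sum_eq_single i fun q hq => by rw [hdiag hq, mul_zero],
      transpose_apply]
  exact pos_of_mul_pos_left (hii ▸ one_pos) hM.diag_pos.le

end Factorization

end Matrix

theorem Fin.forall_nat_of_forall_succ {m : ℕ} {Q : ℕ → Prop} (h : ∀ c : Fin m, Q (c + 1))
    {k : ℕ} (hk1 : 1 ≤ k) (hk : k ≤ m) : Q k := by
  obtain ⟨c, rfl⟩ : ∃ c, k = c + 1 := ⟨k - 1, by omega⟩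
  exact h ⟨c, by omega⟩

section Lanczos

variable {n j m : ℕ} {A : Matrix (Fin n) (Fin n) ℝ} {v : ℕ → Fin n → ℝ} {t : ℕ → ℕ → ℝ}

def OrthonormalUpTo (v : ℕ → Fin n → ℝ) (N : ℕ) : Prop :=
  ∀ i l, 1 ≤ i → i ≤ N → 1 ≤ l → l ≤ N → v i ⬝ᵥ v l = if i = l then 1 else 0

theorem OrthonormalUpTo.mono {M N : ℕ} (h : OrthonormalUpTo v N) (hMN : M ≤ N) :
    OrthonormalUpTo v M :=
  fun i l hi1 hi hl1 hl => h i l hi1 (hi.trans hMN) hl1 (hl.trans hMN)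

def ArnoldiRelation (A : Matrix (Fin n) (Fin n) ℝ) (v : ℕ → Fin n → ℝ) (t : ℕ → ℕ → ℝ)
    (j : ℕ) : Prop :=
  ∀ k, 1 ≤ k → k ≤ j → A *ᵥ v k = (∑ i ∈ Finset.Icc 1 k, t i k • v i) + t (k+1) k • v (k+1)

theorem ArnoldiRelation.dotProduct_mulVec (horth : OrthonormalUpTo v (j + 1))
    (harn : ArnoldiRelation A v t j) {i l : ℕ} (hi1 : 1 ≤ i) (hi : i ≤ j + 1) (hl1 : 1 ≤ l)
    (hl : l ≤ j) : v i ⬝ᵥ A *ᵥ v l = if i ≤ l + 1 then t i l else 0 := by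
  have hAv : A *ᵥ v l = ∑ q ∈ Finset.Icc 1 (l + 1), t q l • v q := by
    rw [Finset.sum_Icc_succ_top (by omega), harn l hl1 hl]
  have hterm : ∀ q ∈ Finset.Icc 1 (l + 1), v i ⬝ᵥ t q l • v q = if i = q then t q l else 0 := by
    intro q hq
    rw [Finset.mem_Icc] at hq
    rw [dotProduct_smul, horth i q hi1 hi hq.1 (by omega), smul_eq_mul, mul_ite, mul_one,
      mul_zero]
  rw [hAv, dotProduct_sum, Finset.sum_congr rfl hterm, Finset.sum_ite_eq]
  simp [hi1]

variable {V : Matrix (Fin n) (Fin m) ℝ}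

theorem ArnoldiRelation.isLowerHessenberg (hA : A.IsSymm) (horth : OrthonormalUpTo v (j + 1))
    (harn : ArnoldiRelation A v t j) (hm : m ≤ j) (hV : ∀ c : Fin m, Vᵀ c = v (c + 1)) :
    (Vᵀ * A * V).IsLowerHessenberg := by
  intro i l hil
  rw [transpose_mul_mul_apply, hV, hV, hA.dotProduct_mulVec_comm,
    harn.dotProduct_mulVec horth (by omega) (by omega) (by omega) (by omega), if_neg (by omega)]

theorem ArnoldiRelation.transpose_mul_mul_apply_superdiag (hA : A.IsSymm)
    (horth : OrthonormalUpTo v (j + 1)) (harn : ArnoldiRelation A v t j) (hm : m ≤ j)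
    (hV : ∀ c : Fin m, Vᵀ c = v (c + 1)) {c' c : Fin m} (hc : (c : ℕ) = c' + 1) :
    (Vᵀ * A * V) c' c = t (c + 1) c := by
  rw [transpose_mul_mul_apply, hV, hV, hA.dotProduct_mulVec_comm,
    harn.dotProduct_mulVec horth (by omega) (by omega) (by omega) (by omega), if_pos (by omega),
    hc]

end Lanczos

section Directions

variable {n m : ℕ} {A : Matrix (Fin n) (Fin n) ℝ} {V : Matrix (Fin n) (Fin m) ℝ}
  {L U : Matrix (Fin m) (Fin m) ℝ} {v p : ℕ → Fin n → ℝ} {uD : ℕ → ℝ}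

theorem dotProduct_mulVec_eq_zero_of_isDiag {P : Matrix (Fin n) (Fin m) ℝ}
    (hM : (Pᵀ * A * P).IsDiag) (hP : ∀ c : Fin m, Pᵀ c = p (c + 1)) {i k : ℕ} (hi1 : 1 ≤ i)
    (hi : i ≤ m) (hk1 : 1 ≤ k) (hk : k ≤ m) (hik : i ≠ k) : (A *ᵥ p i) ⬝ᵥ p k = 0 := by
  obtain ⟨c, rfl⟩ : ∃ c, i = c + 1 := ⟨i - 1, by omega⟩
  obtain ⟨d, rfl⟩ : ∃ d, k = d + 1 := ⟨k - 1, by omega⟩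
  rw [dotProduct_comm, ← hP ⟨c, by omega⟩, ← hP ⟨d, by omega⟩, ← transpose_mul_mul_apply]
  exact hM (Fin.ne_of_val_ne (by simpa using hik.symm))

theorem pivot_pos_of_posDef (hL : L.IsLowerTriangular) (hLd : ∀ i, L i i = 1)
    (hU : U.IsUpperTriangular) (hUdet : IsUnit U.det) (hLU : Vᵀ * A * V = L * U)
    (hPD : ((V * U⁻¹)ᵀ * A * (V * U⁻¹)).PosDef) (huD : ∀ c : Fin m, U c c = uD (c + 1)) :
    ∀ k, 1 ≤ k → k ≤ m → 0 < uD k := fun _ =>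
  Fin.forall_nat_of_forall_succ (Q := fun k => 0 < uD k) fun c => huD c ▸
    diag_pos_of_posDef_eq_inv_transpose_mul hU hUdet hL hLd hPD
      (transpose_mul_mul_mul_inv hUdet hLU) c

theorem dotProduct_mulVec_directions_eq_zero (hL : L.IsLowerTriangular)
    (hU : U.IsUpperTriangular) (hUdet : IsUnit U.det) (hLU : Vᵀ * A * V = L * U)
    (hPD : ((V * U⁻¹)ᵀ * A * (V * U⁻¹)).PosDef) (hp : ∀ c : Fin m, (V * U⁻¹)ᵀ c = p (c + 1))
    {i k : ℕ} (hi1 : 1 ≤ i) (hi : i ≤ m) (hk1 : 1 ≤ k) (hk : k ≤ m) (hik : i ≠ k) :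
    (A *ᵥ p i) ⬝ᵥ p k = 0 :=
  dotProduct_mulVec_eq_zero_of_isDiag (isDiag_of_eq_inv_transpose_mul hU hUdet hL
    (isHermitian_iff_isSymm.mp hPD.isHermitian) (transpose_mul_mul_mul_inv hUdet hLU)) hp hi1 hi
    hk1 hk hik

theorem lanczos_vector_one_eq (h0 : 0 < m) (hU : U.IsUpperTriangular) (hUdet : IsUnit U.det)
    (hv : ∀ c : Fin m, Vᵀ c = v (c + 1)) (hp : ∀ c : Fin m, (V * U⁻¹)ᵀ c = p (c + 1))
    (huD : ∀ c : Fin m, U c c = uD (c + 1)) : v 1 = uD 1 • p 1 := by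
  simpa [nonsing_inv_mul_cancel_right _ _ hUdet, hv, hp, huD] using
    transpose_mul_of_val_eq_zero (P := V * U⁻¹) hU (c := ⟨0, h0⟩) rfl

theorem lanczos_vector_add_two_eq {j : ℕ} {t : ℕ → ℕ → ℝ} (hA : A.IsSymm)
    (horth : OrthonormalUpTo v (j + 1)) (harn : ArnoldiRelation A v t j) (hm : m ≤ j)
    (hL : L.IsLowerTriangular) (hLd : ∀ i, L i i = 1) (hU : U.IsUpperTriangular)
    (hUdet : IsUnit U.det) (hLU : Vᵀ * A * V = L * U) (hv : ∀ c : Fin m, Vᵀ c = v (c + 1))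
    (hp : ∀ c : Fin m, (V * U⁻¹)ᵀ c = p (c + 1)) (huD : ∀ c : Fin m, U c c = uD (c + 1))
    {k : ℕ} (hk : k + 2 ≤ m) :
    v (k + 2) = uD (k + 2) • p (k + 2) + t (k + 2) (k + 1) • p (k + 1) := by
  have hUh : U.IsLowerHessenberg :=
    hL.isLowerHessenberg_of_mul hLd (hLU ▸ harn.isLowerHessenberg hA horth hm hv)
  have hsup := hL.mul_apply_superdiag hLd hUh (i := ⟨k, by omega⟩) (l := ⟨k + 1, hk⟩) rfl
  rw [← hLU, harn.transpose_mul_mul_apply_superdiag hA horth hm hv rfl] at hsup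
  simpa [nonsing_inv_mul_cancel_right _ _ hUdet, hv, hp, huD, ← hsup] using
    transpose_mul_of_isLowerHessenberg (P := V * U⁻¹) hU hUh (c' := ⟨k, by omega⟩)
      (c := ⟨k + 1, hk⟩) rfl

end Directions

section Diom

variable {n j : ℕ} {A : Matrix (Fin n) (Fin n) ℝ} {b : Fin n → ℝ}
  {v p x : ℕ → Fin n → ℝ} {t : ℕ → ℕ → ℝ} {uD ζ : ℕ → ℝ} {β : ℝ}

theorem initial_residual_dotProduct_direction (horth : OrthonormalUpTo v j)
    (hu : ∀ k, 1 ≤ k → k ≤ j → uD k ≠ 0) (hp1 : v 1 = uD 1 • p 1)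
    (hp : ∀ k, k + 2 ≤ j → v (k + 2) = uD (k + 2) • p (k + 2) + t (k + 2) (k + 1) • p (k + 1))
    (hζ1 : ζ 1 = β) (hζ : ∀ k, 1 ≤ k → k ≤ j → ζ (k + 1) = -(t (k + 1) k / uD k) * ζ k) :
    ∀ k, k + 1 ≤ j → (β • v 1) ⬝ᵥ p (k + 1) = ζ (k + 1) / uD (k + 1) := by
  intro k
  induction k with
  | zero =>
    intro hj
    have h11 : uD 1 * (v 1 ⬝ᵥ p 1) = 1 := by
      have h := horth 1 1 le_rfl (by omega) le_rfl (by omega)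
      rw [if_pos rfl] at h
      nth_rw 2 [hp1] at h
      rwa [dotProduct_smul, smul_eq_mul] at h
    rw [smul_dotProduct, smul_eq_mul, hζ1, eq_div_iff (hu 1 le_rfl hj)]
    linear_combination β * h11
  | succ k ih =>
    intro hk
    rw [show k + 1 + 1 = k + 2 from rfl]
    have h1k : uD (k + 2) * (v 1 ⬝ᵥ p (k + 2)) + t (k + 2) (k + 1) * (v 1 ⬝ᵥ p (k + 1)) = 0 := by
      have h := horth 1 (k + 2) le_rfl (by omega) (by omega) (by omega)
      rwa [if_neg (by omega), hp k hk, dotProduct_add, dotProduct_smul, dotProduct_smul,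
        smul_eq_mul, smul_eq_mul] at h
    have ih' := ih (by omega)
    rw [smul_dotProduct, smul_eq_mul] at ih' ⊢
    rw [hζ (k + 1) (by omega) (by omega)]
    have hu1 := hu (k + 1) (by omega) (by omega)
    have hu2 := hu (k + 2) (by omega) hk
    field_simp
    field_simp at ih'
    linear_combination β * uD (k + 1) * h1k - t (k + 2) (k + 1) * ih'

theorem gradient_dotProduct_eq_of_conj {m : ℕ} {w : Fin n → ℝ}
    (hx : ∀ k, 1 ≤ k → k ≤ m → x k = x (k - 1) + ζ k • p k)
    (hw : ∀ i, 1 ≤ i → i ≤ m → (A *ᵥ p i) ⬝ᵥ w = 0) :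
    (A *ᵥ x m - b) ⬝ᵥ w = (A *ᵥ x 0 - b) ⬝ᵥ w := by
  induction m with
  | zero => rfl
  | succ m ih =>
    rw [hx (m + 1) (by omega) le_rfl, Nat.add_sub_cancel, mulVec_add, mulVec_smul,
      add_sub_right_comm, add_dotProduct, smul_dotProduct, hw (m + 1) (by omega) le_rfl,
      smul_zero, add_zero]
    exact ih (fun k h1 h2 => hx k h1 (by omega)) fun i h1 h2 => hw i h1 (by omega)

theorem neg_one_pow_mul_pos (hζ1 : 0 < ζ 1)
    (hζ : ∀ k, 1 ≤ k → k ≤ j → ζ (k + 1) = -(t (k + 1) k / uD k) * ζ k)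
    (ht : ∀ k, 1 ≤ k → k ≤ j → 0 < t (k+1) k) (hu : ∀ k, 1 ≤ k → k ≤ j → 0 < uD k) :
    ∀ k, 1 ≤ k → k ≤ j + 1 → 0 < (-1 : ℝ) ^ (k - 1) * ζ k := by
  intro k hk
  induction k, hk using Nat.le_induction with
  | base => simpa using hζ1
  | succ k hk ih =>
    intro hkj
    have hstep : (-1 : ℝ) ^ (k + 1 - 1) * ζ (k + 1)
        = t (k + 1) k / uD k * ((-1 : ℝ) ^ (k - 1) * ζ k) := by
      obtain ⟨k, rfl⟩ : ∃ i, k = i + 1 := ⟨k - 1, by omega⟩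
      rw [hζ _ hk (by omega)]
      simp only [Nat.add_sub_cancel, pow_succ]
      ring
    rw [hstep]
    exact mul_pos (div_pos (ht k hk (by omega)) (hu k hk (by omega))) (ih (by omega))

theorem eq_neg_one_pow_mul_abs {k : ℕ} {z : ℝ} (h : 0 < (-1 : ℝ) ^ k * z) :
    z = (-1 : ℝ) ^ k * |z| := by
  rcases neg_one_pow_eq_or ℝ k with hk | hk <;> rw [hk] at h ⊢
  · rw [one_mul] at h ⊢
    exact (abs_of_pos h).symm
  · rw [abs_of_neg (by linarith)]
    ring

theorem neg_div_eq_neg_one_pow_mul_abs {k : ℕ} {τ u u' z z' : ℝ} (hz' : z' = -(τ / u) * z)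
    (hz : 0 < (-1 : ℝ) ^ k * z) (hu : u ≠ 0) (hu' : u' ≠ 0) :
    -(z' / u') = (-1 : ℝ) ^ k * (τ * |z|) / (u * u') := by
  rw [hz']
  nth_rw 1 [eq_neg_one_pow_mul_abs hz]
  field_simp

theorem sign_pattern_of_eq_neg_div {γ : ℕ → ℝ} (hζ1 : 0 < ζ 1)
    (hζ : ∀ k, 1 ≤ k → k ≤ j → ζ (k + 1) = -(t (k + 1) k / uD k) * ζ k)
    (ht : ∀ k, 1 ≤ k → k ≤ j → 0 < t (k+1) k) (hu : ∀ k, 1 ≤ k → k ≤ j → 0 < uD k)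
    (hγ : ∀ k, k + 1 ≤ j → γ k = -(ζ (k + 1) / uD (k + 1))) :
    (∀ k, 1 ≤ k → k + 1 ≤ j → γ k = (-1 : ℝ) ^ (k - 1) * (t (k+1) k * |ζ k|) / (uD k * uD (k+1))) ∧
    (∀ k, 1 ≤ k → k + 1 ≤ j → Odd k → 0 < γ k) := by
  have hsign := neg_one_pow_mul_pos hζ1 hζ ht hu
  have hformula : ∀ k, 1 ≤ k → k + 1 ≤ j →
      γ k = (-1 : ℝ) ^ (k - 1) * (t (k+1) k * |ζ k|) / (uD k * uD (k+1)) := fun k hk hkj => by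
    rw [hγ k hkj]
    exact neg_div_eq_neg_one_pow_mul_abs (hζ k hk (by omega)) (hsign k hk (by omega))
      (hu k hk (by omega)).ne' (hu (k + 1) (by omega) hkj).ne'
  refine ⟨hformula, fun k hk hkj hodd => ?_⟩
  have hζk : ζ k ≠ 0 := fun h0 => by simpa [h0] using hsign k hk (by omega)
  have := hu k hk (by omega)
  have := hu (k + 1) (by omega) hkj
  have := ht k hk (by omega)
  rw [hformula k hk hkj, (Nat.Odd.sub_odd hodd odd_one).neg_one_pow, one_mul]
  positivity

end Diom

/-- In DIOM with `P_kᵀ A P_k` symmetric positive definite for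
`k = 1,…,j`, the DIOM directions satisfy `g₀ᵀp₁ = −β/u_{1,1}` and, for `k ≥ 1`,
`g_kᵀp_{k+1} = (−1)^{k−1} t_{k+1,k}|ζ_k|/(u_{k,k}u_{k+1,k+1})`; in particular the sign
alternates and `p_{k+1}` is an ascent direction whenever `k` is odd, so `p_{k+1}` is not
a descent direction for every `k`. -/
theorem diom_directions_not_always_descent
    (n : ℕ) (A : Matrix (Fin n) (Fin n) ℝ) (hA : A.IsSymm)
    (b x0 : Fin n → ℝ) (j : ℕ)
    (β : ℝ) (hβ : β = Real.sqrt ((b - A *ᵥ x0) ⬝ᵥ (b - A *ᵥ x0)))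
    (hr0 : b - A *ᵥ x0 ≠ 0)
    -- Lanczos process (vectors indexed from 1)
    (v : ℕ → Fin n → ℝ) (t : ℕ → ℕ → ℝ)
    (hv1 : v 1 = β⁻¹ • (b - A *ᵥ x0))
    (horth : ∀ i l, 1 ≤ i → i ≤ j + 1 → 1 ≤ l → l ≤ j + 1 →
      v i ⬝ᵥ v l = if i = l then 1 else 0)
    (harn : ∀ k, 1 ≤ k → k ≤ j →
      A *ᵥ v k = (∑ i ∈ Finset.Icc 1 k, t i k • v i) + t (k+1) k • v (k+1))
    (htpos : ∀ k, 1 ≤ k → k ≤ j → 0 < t (k+1) k)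
    (V : (k : ℕ) → Matrix (Fin n) (Fin k) ℝ)
    (hV : ∀ k, ∀ (r : Fin n) (c : Fin k), V k r c = v ((c : ℕ) + 1) r)
    (T : (k : ℕ) → Matrix (Fin k) (Fin k) ℝ)
    (hT : ∀ k, T k = (V k)ᵀ * A * V k)
    -- LU factorization T_k = L_k U_k
    (L U : (k : ℕ) → Matrix (Fin k) (Fin k) ℝ)
    (hLU : ∀ k, 1 ≤ k → k ≤ j → T k = L k * U k)
    (hLdiag : ∀ k, k ≤ j → ∀ i : Fin k, L k i i = 1)
    (hLlow : ∀ k, k ≤ j → ∀ i l : Fin k,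
      (i : ℕ) ≠ (l : ℕ) → (i : ℕ) ≠ (l : ℕ) + 1 → L k i l = 0)
    (hUtri : ∀ k, k ≤ j → ∀ i l : Fin k, (l : ℕ) < (i : ℕ) → U k i l = 0)
    -- pivots and subdiagonal multipliers as scalar sequences
    (uD : ℕ → ℝ)
    (huD : ∀ k, k ≤ j → ∀ i : Fin k, U k i i = uD ((i : ℕ) + 1))
    (ℓs : ℕ → ℝ)
    (hls : ∀ k, 1 ≤ k → k ≤ j → ℓs (k+1) = t (k+1) k / uD k)
    -- solution coefficients ζ_k
    (ζ : ℕ → ℝ) (hζ1 : ζ 1 = β)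
    (hζ : ∀ k, 1 ≤ k → k ≤ j → ζ (k+1) = -ℓs (k+1) * ζ k)
    -- P_k = V_k U_k⁻¹ with P_kᵀ A P_k symmetric positive definite
    (P : (k : ℕ) → Matrix (Fin n) (Fin k) ℝ)
    (hP : ∀ k, P k = V k * (U k)⁻¹)
    (hSPD : ∀ k, 1 ≤ k → k ≤ j → ((P k)ᵀ * A * P k).PosDef)
    -- the DIOM direction vectors p_k (columns of P_k) and iterates
    (p : ℕ → Fin n → ℝ)
    (hpcol : ∀ k, 1 ≤ k → k ≤ j → ∀ c : Fin k, p ((c : ℕ) + 1) = fun r => P k r c)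
    (x : ℕ → Fin n → ℝ)
    (hx0 : x 0 = x0)
    (hx : ∀ k, 1 ≤ k → k ≤ j → x k = x (k - 1) + ζ k • p k) :
    (1 ≤ j → (A *ᵥ x 0 - b) ⬝ᵥ p 1 = -β / uD 1) ∧
    (∀ k, 1 ≤ k → k + 1 ≤ j →
      (A *ᵥ x k - b) ⬝ᵥ p (k+1) =
        (-1 : ℝ) ^ (k - 1) * (t (k+1) k * |ζ k|) / (uD k * uD (k+1))) ∧
    (∀ k, 1 ≤ k → k + 1 ≤ j → Odd k → 0 < (A *ᵥ x k - b) ⬝ᵥ p (k+1)) := by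
  have hβpos : 0 < β :=
    hβ ▸ Real.sqrt_pos.mpr (by simpa using dotProduct_self_star_pos_iff.mpr hr0)
  have hζt : ∀ k, 1 ≤ k → k ≤ j → ζ (k + 1) = -(t (k + 1) k / uD k) * ζ k :=
    fun k h1 h2 => by rw [hζ k h1 h2, hls k h1 h2]
  rcases Nat.eq_zero_or_pos j with rfl | hj
  · exact ⟨fun h => absurd h (by omega), fun _ _ h => absurd h (by omega),
      fun _ _ h => absurd h (by omega)⟩
  have hL : (L j).IsLowerTriangular := fun i l (hil : i < l) =>
    hLlow j le_rfl i l (by omega) (by omega)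
  have hVAV : (V j)ᵀ * A * V j = L j * U j := hT j ▸ hLU j hj le_rfl
  have hPD := hP j ▸ hSPD j hj le_rfl
  have : NeZero j := ⟨hj.ne'⟩
  have hUdet : IsUnit (U j).det := isUnit_det_of_posDef_mul_inv hPD
  have hv : ∀ c : Fin j, (V j)ᵀ c = v (c + 1) := fun c => funext fun r => hV j r c
  have hp : ∀ c : Fin j, (V j * (U j)⁻¹)ᵀ c = p (c + 1) :=
    fun c => hP j ▸ (hpcol j hj le_rfl c).symm
  have hpiv := pivot_pos_of_posDef hL (hLdiag j le_rfl) (hUtri j le_rfl) hUdet hVAV hPD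
    (huD j le_rfl)
  have hres := initial_residual_dotProduct_direction
    (OrthonormalUpTo.mono horth j.le_succ) (fun k h1 h2 => (hpiv k h1 h2).ne')
    (lanczos_vector_one_eq hj (hUtri j le_rfl) hUdet hv hp (huD j le_rfl))
    (fun k => lanczos_vector_add_two_eq hA horth harn le_rfl hL (hLdiag j le_rfl)
      (hUtri j le_rfl) hUdet hVAV hv hp (huD j le_rfl)) hζ1 hζt
  have hgrad : ∀ k, k + 1 ≤ j → (A *ᵥ x k - b) ⬝ᵥ p (k + 1) = -(ζ (k + 1) / uD (k + 1)) :=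
    fun k hk => by
      rw [gradient_dotProduct_eq_of_conj (fun i h1 h2 => hx i h1 (by omega)) fun i h1 h2 =>
          dotProduct_mulVec_directions_eq_zero hL (hUtri j le_rfl) hUdet hVAV hPD hp h1
            (by omega) (by omega) hk (by omega),
        hx0, ← neg_sub, neg_dotProduct, ← hres k hk, hv1, smul_inv_smul₀ hβpos.ne']
  exact ⟨fun hj => by simpa [hζ1, neg_div] using hgrad 0 hj,
    sign_pattern_of_eq_neg_div (hζ1 ▸ hβpos) hζt htpos hpiv hgrad⟩
end
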